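/- There exist constants β > 0 and C > 0 such that for all n ≥ 2, all noise rates p ≤ β/n², every K ∈ ℕ with K ≥ 1, and every initial population P_0 with {0, n} ⊆ f(P_0), the K-extreme-values-keeping SEMO with reevaluation on OneMinMax under one-bit noise with rate p satisfies Pr[T̂_total^K ≥ K] ≤ C · n² / K. -/

import Mathlib

open scoped ENNReal NNReal
open scoped Classical
open MeasureTheory

noncomputable section

/-- The search space `{0,1}^n`. -/
abbrev Pt (n : ℕ) := Fin n → Bool

/-- The OneMax value: number of one-bits. -/
def fval {n : ℕ} (x : Pt n) : ℕ := (Finset.univ.filter fun i => x i = true).card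

/-- The OneMinMax objective `g(x) = (f(x), n - f(x))`. -/
def gval {n : ℕ} (x : Pt n) : ℕ × ℕ := (fval x, n - fval x)

/-- Weak Pareto dominance on `ℕ × ℕ`. -/
def domLe (a b : ℕ × ℕ) : Prop := a.1 ≤ b.1 ∧ a.2 ≤ b.2

/-- Strict Pareto dominance on `ℕ × ℕ`. -/
def domLt (a b : ℕ × ℕ) : Prop := domLe a b ∧ a ≠ b

/-- Flip bit `i` of `x`. -/
def flipBit {n : ℕ} (x : Pt n) (i : Fin n) : Pt n := Function.update x i (!x i)

/-- One-bit mutation: flip one uniformly chosen bit. -/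
def mutate {n : ℕ} (x : Pt n) : PMF (Pt n) :=
  if h : (Finset.univ : Finset (Fin n)).Nonempty then
    (PMF.uniformOfFinset Finset.univ h).map (flipBit x)
  else PMF.pure x

/-- One-bit noise with rate `p`: with probability `p` a uniformly random bit is flipped. -/
def noisyPoint {n : ℕ} (p : ℝ≥0) (hp : p ≤ 1) (x : Pt n) : PMF (Pt n) :=
  (PMF.bernoulli p (by exact_mod_cast hp)).bind fun b =>
    if b then mutate x else PMF.pure x

/-- The noisy objective value `g̃(x) = g(x̃)`. -/
def noisyG {n : ℕ} (p : ℝ≥0) (hp : p ≤ 1) (x : Pt n) : PMF (ℕ × ℕ) :=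
  (noisyPoint p hp x).map gval

/-- Probability of an event under a `PMF`. -/
def prEvent {α : Type*} (μ : PMF α) (E : Set α) : ℝ≥0∞ := μ.toOuterMeasure E

/-- Distribution of the state of a Markov chain at time `t`. -/
def iterDist {S : Type*} (init : PMF S) (step : S → PMF S) : ℕ → PMF S
  | 0 => init
  | t + 1 => (iterDist init step t).bind step

/-- `notHitBy step good t s` is the probability that starting from `s`, none of the
states at times `0, 1, …, t` satisfies `good`; i.e. `Pr[T > t]` for the hitting time `T`. -/
def notHitBy {S : Type*} (step : S → PMF S) (good : S → Prop) : ℕ → S → ℝ≥0∞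
  | 0 => fun s => if good s then 0 else 1
  | t + 1 => fun s => if good s then 0 else ∑' s', step s s' * notHitBy step good t s'

/-- Expected hitting time of `good`, via `E[T] = ∑_{t ≥ 0} Pr[T > t]`. -/
def expHit {S : Type*} (init : PMF S) (step : S → PMF S) (good : S → Prop) : ℝ≥0∞ :=
  ∑' t : ℕ, ∑' s, init s * notHitBy step good t s

/-- Law of the trajectory `(s_0, …, s_t)` of the Markov chain. -/
def trajPMF {S : Type*} (init : PMF S) (step : S → PMF S) : (t : ℕ) → PMF (Fin (t + 1) → S)
  | 0 => init.map fun s _ => s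
  | t + 1 => (trajPMF init step t).bind fun tr =>
      (step (tr (Fin.last t))).map fun s' => Fin.snoc tr s'

/-- Hitting time of `good` along a trajectory, valued in `ℕ∞`. -/
def hitTime {S : Type*} (good : S → Prop) (traj : ℕ → S) : ℕ∞ :=
  sInf ((fun t : ℕ => (t : ℕ∞)) '' {t | good (traj t)})

/-! ### SEMO without reevaluation -/

/-- State: population members together with their stored noisy objective values. -/
abbrev StateNR (n : ℕ) := Multiset (Pt n × (ℕ × ℕ))

/-- One iteration of the SEMO without reevaluation. -/
def stepNR {n : ℕ} (p : ℝ≥0) (hp : p ≤ 1) (P : StateNR n) : PMF (StateNR n) :=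
  if hP : P = 0 then PMF.pure P else
    (PMF.ofMultiset P hP).bind fun xv =>
      (mutate xv.1).bind fun x' =>
        (noisyG p hp x').map fun w =>
          if ∃ y ∈ P, domLt w y.2 then P
          else (x', w) ::ₘ P.filter fun y => ¬ domLe y.2 w

/-- Initialization: a single uniformly random point with an independent noisy evaluation. -/
def initNR (n : ℕ) (p : ℝ≥0) (hp : p ≤ 1) : PMF (StateNR n) :=
  (PMF.uniformOfFintype (Pt n)).bind fun x =>
    (noisyG p hp x).map fun w => ({(x, w)} : StateNR n)

/-- The set of stored noisy first-coordinate values `V(P)`. -/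
def VvalsNR {n : ℕ} (P : StateNR n) : Set ℕ := {v | ∃ y ∈ P, (y : Pt n × ℕ × ℕ).2.1 = v}

/-- Both extreme values `0` and `n` appear among the stored noisy first coordinates. -/
def goodExNR {n : ℕ} (P : StateNR n) : Prop := 0 ∈ VvalsNR P ∧ (n : ℕ) ∈ VvalsNR P

/-- The true OneMax values of the population cover the whole Pareto front `[0..n]`. -/
def fCoveredNR {n : ℕ} (P : StateNR n) : Prop :=
  {k : ℕ | ∃ y ∈ P, fval (y : Pt n × ℕ × ℕ).1 = k} = Set.Icc 0 n

/-! ### SEMO with reevaluation -/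

/-- State: a finite multiset of points. -/
abbrev StateR (n : ℕ) := Multiset (Pt n)

/-- The elimination procedure: process the elements of the list in order, drawing a fresh
noisy value for each, discarding an element if strictly dominated by a kept one, and
otherwise keeping it while removing the kept elements it dominates. -/
def elimAux {n : ℕ} (p : ℝ≥0) (hp : p ≤ 1) :
    List (Pt n) → Multiset (Pt n × (ℕ × ℕ)) → PMF (Multiset (Pt n × (ℕ × ℕ)))
  | [], kept => PMF.pure kept
  | x :: rest, kept =>
      (noisyG p hp x).bind fun w =>
        if ∃ y ∈ kept, domLt w (y : Pt n × ℕ × ℕ).2 then elimAux p hp rest kept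
        else elimAux p hp rest ((x, w) ::ₘ kept.filter fun y => ¬ domLe y.2 w)

/-- One iteration of the SEMO with reevaluation: uniform parent selection, one-bit
mutation, then elimination of `P ∪ {x'}` processed in a uniformly random order. -/
def stepR {n : ℕ} (p : ℝ≥0) (hp : p ≤ 1) (P : StateR n) : PMF (StateR n) :=
  if hP : P = 0 then PMF.pure P else
    (PMF.ofMultiset P hP).bind fun x =>
      (mutate x).bind fun x' =>
        (PMF.ofMultiset (↑((x' ::ₘ P).toList.permutations) : Multiset (List (Pt n)))
          (by
            simp only [ne_eq, Multiset.coe_eq_zero]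
            exact List.ne_nil_of_mem
              (List.mem_permutations.mpr (List.Perm.refl _)))).bind fun l =>
          (elimAux p hp l 0).map fun kept => kept.map Prod.fst

/-- Initialization: a single uniformly random point. -/
def initR (n : ℕ) : PMF (StateR n) :=
  (PMF.uniformOfFintype (Pt n)).map fun x => ({x} : Multiset (Pt n))

/-- The population contains members of true OneMax value `0` and of value `n`. -/
def goodExR {n : ℕ} (P : StateR n) : Prop :=
  (∃ x ∈ P, fval (x : Pt n) = 0) ∧ (∃ x ∈ P, fval (x : Pt n) = n)

/-- The true OneMax values of the population cover the whole Pareto front `[0..n]`. -/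
def fCoveredR {n : ℕ} (P : StateR n) : Prop :=
  {k : ℕ | ∃ x ∈ P, fval (x : Pt n) = k} = Set.Icc 0 n

/-- Number of distinct true OneMax values in the population. -/
def Lval {n : ℕ} (P : StateR n) : ℕ := (P.map fval).toFinset.card

/-- Append the all-zeros (resp. all-ones) string if no member has value 0 (resp. `n`). -/
def fixExtremes {n : ℕ} (P : StateR n) : StateR n :=
  let P1 := if ∃ x ∈ P, fval (x : Pt n) = 0 then P else ((fun _ => false) : Pt n) ::ₘ P
  if ∃ x ∈ P1, fval (x : Pt n) = n then P1 else ((fun _ => true) : Pt n) ::ₘ P1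

/-- One iteration of the `K`-extreme-values-keeping SEMO with reevaluation, with the
iteration counter as part of the state. -/
def stepK {n : ℕ} (p : ℝ≥0) (hp : p ≤ 1) (K : ℕ) (st : ℕ × StateR n) :
    PMF (ℕ × StateR n) :=
  (stepR p hp st.2).map fun Q => (st.1 + 1, if st.1 < K then fixExtremes Q else Q)


/-! Let `L(P)` be the number of distinct true OneMax values in the population. While the
extremes are re-added, a population that does not cover `[0..n]` has a member at the edge of
a gap that creates a missing value with probability at least `1/2` after mutation, and it is
chosen as parent with probability at least `1/|P|`. Every point of OneMinMax is Pareto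
optimal, so elimination never discards the point it processes; a wrong noisy value can only
cost the two values involved, which happens with probability at most `p` per point. Hence
`E[L]` grows by at least `1/(2|P|) - 2p(|P| + 1) ≥ 1/(10n)` per step, as populations have at
most `n + 3` members. Since `L ≤ n + 1`, additive drift gives
`(K - 1) Pr[T ≥ K] / (10n) ≤ n + 1`. -/

namespace PMF

variable {α β : Type*}

def expect (μ : PMF α) (f : α → ℝ≥0∞) : ℝ≥0∞ := ∑' a, μ a * f a

lemma expect_pure (a : α) (f : α → ℝ≥0∞) : (PMF.pure a).expect f = f a := by
  rw [expect, tsum_eq_single a fun b hb => by simp [pure_apply, hb]]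
  simp

lemma expect_bind (μ : PMF α) (g : α → PMF β) (f : β → ℝ≥0∞) :
    (μ.bind g).expect f = μ.expect fun a => (g a).expect f := by
  simp only [expect, bind_apply, ← ENNReal.tsum_mul_right, ← ENNReal.tsum_mul_left, mul_assoc]
  exact ENNReal.tsum_comm

lemma expect_map (μ : PMF α) (h : α → β) (f : β → ℝ≥0∞) :
    (μ.map h).expect f = μ.expect (f ∘ h) := by
  simp only [map, expect_bind, Function.comp_apply, expect_pure]
  rfl

lemma expect_mono {μ : PMF α} {f g : α → ℝ≥0∞} (h : ∀ a ∈ μ.support, f a ≤ g a) :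
    μ.expect f ≤ μ.expect g := by
  refine ENNReal.tsum_le_tsum fun a => ?_
  by_cases ha : μ a = 0
  · simp [ha]
  · exact mul_le_mul_right (h a ha) _

lemma expect_congr {μ : PMF α} {f g : α → ℝ≥0∞} (h : ∀ a ∈ μ.support, f a = g a) :
    μ.expect f = μ.expect g :=
  le_antisymm (expect_mono fun a ha => (h a ha).le) (expect_mono fun a ha => (h a ha).ge)

lemma expect_add (μ : PMF α) (f g : α → ℝ≥0∞) :
    μ.expect (fun a => f a + g a) = μ.expect f + μ.expect g := by
  simp [expect, mul_add, ENNReal.tsum_add]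

lemma expect_const (μ : PMF α) (c : ℝ≥0∞) : μ.expect (fun _ => c) = c := by
  simp [expect, ENNReal.tsum_mul_right]

lemma expect_add_const (μ : PMF α) (f : α → ℝ≥0∞) (c : ℝ≥0∞) :
    μ.expect (fun a => f a + c) = μ.expect f + c := by
  rw [expect_add, expect_const]

lemma expect_const_mul (μ : PMF α) (f : α → ℝ≥0∞) (c : ℝ≥0∞) :
    μ.expect (fun a => c * f a) = c * μ.expect f := by
  simp only [expect, ← ENNReal.tsum_mul_left, mul_left_comm]

lemma expect_sum {ι : Type*} (μ : PMF α) (s : Finset ι) (f : ι → α → ℝ≥0∞) :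
    μ.expect (fun a => ∑ i ∈ s, f i a) = ∑ i ∈ s, μ.expect (f i) := by
  simp only [expect, Finset.mul_sum]
  exact Summable.tsum_finsetSum fun _ _ => ENNReal.summable

lemma expect_le_of_forall_le {μ : PMF α} {f : α → ℝ≥0∞} {c : ℝ≥0∞}
    (h : ∀ a ∈ μ.support, f a ≤ c) : μ.expect f ≤ c :=
  (expect_mono h).trans_eq (expect_const μ c)

lemma le_expect_of_forall_le {μ : PMF α} {f : α → ℝ≥0∞} {c : ℝ≥0∞}
    (h : ∀ a ∈ μ.support, c ≤ f a) : c ≤ μ.expect f :=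
  (expect_const μ c).symm.trans_le (expect_mono h)

lemma apply_mul_le_expect (μ : PMF α) (f : α → ℝ≥0∞) (a : α) : μ a * f a ≤ μ.expect f :=
  ENNReal.le_tsum a

end PMF

open PMF

section HittingTime

variable {S : Type*} (step : S → PMF S) (good : S → Prop)

lemma notHitBy_of_good {s : S} (hs : good s) (t : ℕ) : notHitBy step good t s = 0 := by
  cases t <;> simp [notHitBy, hs]

lemma notHitBy_succ_of_not_good {s : S} (hs : ¬ good s) (t : ℕ) :
    notHitBy step good (t + 1) s = (step s).expect (notHitBy step good t) := by
  simp [notHitBy, hs, expect]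

lemma notHitBy_zero_of_not_good {s : S} (hs : ¬ good s) : notHitBy step good 0 s = 1 := by
  simp [notHitBy, hs]

lemma notHitBy_le_one (t : ℕ) (s : S) : notHitBy step good t s ≤ 1 := by
  induction t generalizing s with
  | zero => by_cases hs : good s <;> simp [notHitBy, hs]
  | succ t ih =>
    by_cases hs : good s
    · simp [notHitBy_of_good step good hs]
    · rw [notHitBy_succ_of_not_good step good hs]
      exact expect_le_of_forall_le fun s' _ => ih s'

lemma notHitBy_succ_le (t : ℕ) (s : S) : notHitBy step good (t + 1) s ≤ notHitBy step good t s := by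
  induction t generalizing s with
  | zero =>
    by_cases hs : good s
    · simp [notHitBy_of_good step good hs]
    · rw [notHitBy_zero_of_not_good step good hs]
      exact notHitBy_le_one step good _ s
  | succ t ih =>
    by_cases hs : good s
    · simp [notHitBy_of_good step good hs]
    · rw [notHitBy_succ_of_not_good step good hs, notHitBy_succ_of_not_good step good hs]
      exact expect_mono fun s' _ => ih s'

lemma notHitBy_antitone (s : S) : Antitone fun t => notHitBy step good t s :=
  antitone_nat_of_succ_le fun t => notHitBy_succ_le step good t s

lemma notHitBy_succ_le_of_forall_mem_support {s : S} {t : ℕ} {c : ℝ≥0∞}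
    (h : ∀ s' ∈ (step s).support, notHitBy step good t s' ≤ c) :
    notHitBy step good (t + 1) s ≤ c := by
  by_cases hs : good s
  · simp [notHitBy_of_good step good hs]
  · rw [notHitBy_succ_of_not_good step good hs]
    exact expect_le_of_forall_le h

variable {step good} {Inv : ℕ → S → Prop} {ψ : S → ℝ≥0∞} {M δ : ℝ≥0∞}

/-- Additive drift; `Inv j` is an invariant guaranteed for the next `j` steps. -/
lemma drift_mul_sum_notHitBy_add_le (hψ : ∀ s, ψ s ≤ M)
    (hInv : ∀ j s, Inv (j + 1) s → ¬ good s → ∀ s' ∈ (step s).support, Inv j s')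
    (hdrift : ∀ j s, Inv j s → ¬ good s → ψ s + δ ≤ (step s).expect ψ)
    (t : ℕ) (s : S) (hs : Inv t s) :
    δ * ∑ k ∈ Finset.range (t + 1), notHitBy step good k s + ψ s ≤ M := by
  induction t generalizing s with
  | zero =>
    by_cases hgood : good s
    · simpa [notHitBy_of_good step good hgood] using hψ s
    simpa [notHitBy_zero_of_not_good step good hgood, add_comm] using
      (hdrift 0 s hs hgood).trans (expect_le_of_forall_le fun s' _ => hψ s')
  | succ t ih =>
    by_cases hgood : good s
    · simpa [notHitBy_of_good step good hgood] using hψ s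
    have hnext : ∀ s' ∈ (step s).support,
        δ * ∑ k ∈ Finset.range (t + 1), notHitBy step good k s' + ψ s' ≤ M :=
      fun s' hs' => ih s' (hInv t s hs hgood s' hs')
    calc δ * ∑ k ∈ Finset.range (t + 1 + 1), notHitBy step good k s + ψ s
        = (step s).expect (fun s' => δ * ∑ k ∈ Finset.range (t + 1), notHitBy step good k s')
            + (ψ s + δ) := by
          rw [Finset.sum_range_succ', notHitBy_zero_of_not_good step good hgood]
          simp only [notHitBy_succ_of_not_good step good hgood, ← expect_sum, expect_const_mul]
          ring
      _ ≤ (step s).expect (fun s' => δ * ∑ k ∈ Finset.range (t + 1), notHitBy step good k s')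
            + (step s).expect ψ := add_le_add le_rfl (hdrift (t + 1) s hs hgood)
      _ = (step s).expect
            (fun s' => δ * ∑ k ∈ Finset.range (t + 1), notHitBy step good k s' + ψ s') :=
          (expect_add _ _ _).symm
      _ ≤ M := expect_le_of_forall_le hnext

lemma drift_mul_notHitBy_le (hψ : ∀ s, ψ s ≤ M)
    (hInv : ∀ j s, Inv (j + 1) s → ¬ good s → ∀ s' ∈ (step s).support, Inv j s')
    (hdrift : ∀ j s, Inv j s → ¬ good s → ψ s + δ ≤ (step s).expect ψ)
    (t : ℕ) (s : S) (hs : Inv t s) :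
    δ * ((t + 1) * notHitBy step good t s) ≤ M := by
  have hsum : ((t + 1 : ℕ) : ℝ≥0∞) * notHitBy step good t s
      ≤ ∑ k ∈ Finset.range (t + 1), notHitBy step good k s := by
    simpa using Finset.card_nsmul_le_sum (Finset.range (t + 1)) _ _ fun k hk =>
      notHitBy_antitone step good s (Finset.mem_range_succ_iff.mp hk)
  calc δ * ((t + 1) * notHitBy step good t s)
      ≤ δ * ∑ k ∈ Finset.range (t + 1), notHitBy step good k s := by
        gcongr; exact_mod_cast hsum
    _ ≤ δ * ∑ k ∈ Finset.range (t + 1), notHitBy step good k s + ψ s := le_self_add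
    _ ≤ M := drift_mul_sum_notHitBy_add_le hψ hInv hdrift t s hs

end HittingTime

section OneMinMax

variable {n : ℕ}

lemma fval_le (x : Pt n) : fval x ≤ n :=
  (Finset.card_filter_le _ _).trans_eq (Finset.card_fin n)

lemma domLe_gval_iff {x y : Pt n} : domLe (gval x) (gval y) ↔ fval x = fval y := by
  have := fval_le x; have := fval_le y
  simp only [domLe, gval]
  omega

lemma not_domLt_gval (x y : Pt n) : ¬ domLt (gval x) (gval y) := by
  rintro ⟨hle, hne⟩
  exact hne (by rw [gval, gval, domLe_gval_iff.mp hle])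

lemma fval_flipBit_of_false {x : Pt n} {i : Fin n} (h : x i = false) :
    fval (flipBit x i) = fval x + 1 := by
  have : (Finset.univ.filter fun j => flipBit x i j = true)
      = insert i (Finset.univ.filter fun j => x j = true) := by
    ext j
    by_cases hj : j = i
    · subst hj; simp [flipBit, h]
    · simp [flipBit, Function.update_apply, hj]
  rw [fval, this, Finset.card_insert_of_notMem (by simp [h]), fval]

lemma fval_flipBit_of_true {x : Pt n} {i : Fin n} (h : x i = true) :
    fval (flipBit x i) + 1 = fval x := by
  have : (Finset.univ.filter fun j => flipBit x i j = true)
      = (Finset.univ.filter fun j => x j = true).erase i := by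
    ext j
    by_cases hj : j = i
    · subst hj; simp [flipBit, h]
    · simp [flipBit, Function.update_apply, hj]
  rw [fval, this, Finset.card_erase_add_one (by simp [h]), fval]

lemma card_filter_eq_false (x : Pt n) :
    (Finset.univ.filter fun i => x i = false).card = n - fval x := by
  have := Finset.card_filter_add_card_filter_not (s := Finset.univ) (fun i => x i = true)
  simp only [Bool.not_eq_true, Finset.card_univ, Fintype.card_fin] at this
  rw [fval]
  omega

def fvals (P : Multiset (Pt n)) : Finset ℕ := (P.map fval).toFinset

lemma mem_fvals {P : Multiset (Pt n)} {v : ℕ} : v ∈ fvals P ↔ ∃ x ∈ P, fval x = v := by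
  simp [fvals]

lemma fvals_cons (x : Pt n) (P : Multiset (Pt n)) :
    fvals (x ::ₘ P) = insert (fval x) (fvals P) := by
  simp [fvals]

lemma Lval_eq_card_fvals (P : StateR n) : Lval P = (fvals P).card := rfl

lemma fvals_subset_range (P : StateR n) : fvals P ⊆ Finset.range (n + 1) := by
  intro v hv
  obtain ⟨x, -, rfl⟩ := mem_fvals.mp hv
  exact Finset.mem_range_succ_iff.mpr (fval_le x)

lemma Lval_le (P : StateR n) : Lval P ≤ n + 1 :=
  (Finset.card_le_card (fvals_subset_range P)).trans_eq (Finset.card_range _)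

lemma Lval_mono {P Q : StateR n} (h : P ≤ Q) : Lval P ≤ Lval Q :=
  Finset.card_le_card fun _ hv =>
    let ⟨x, hx, hv⟩ := mem_fvals.mp hv
    mem_fvals.mpr ⟨x, Multiset.mem_of_le h hx, hv⟩

lemma exists_notMem_fvals_of_not_fCoveredR {P : StateR n} (h : ¬ fCoveredR P) :
    ∃ v ≤ n, v ∉ fvals P := by
  by_contra! hcov
  refine h (Set.ext fun k => ⟨?_, fun hk => mem_fvals.mp (hcov k hk.2)⟩)
  rintro ⟨x, -, rfl⟩
  exact ⟨Nat.zero_le _, fval_le x⟩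

lemma goodExR_iff_mem_fvals {P : StateR n} : goodExR P ↔ 0 ∈ fvals P ∧ n ∈ fvals P := by
  simp only [goodExR, mem_fvals]

lemma goodExR.ne_zero {P : StateR n} (h : goodExR P) : P ≠ 0 := by
  rintro rfl
  simp [goodExR] at h

lemma fixExtremes_spec (Q : StateR n) :
    goodExR (fixExtremes Q) ∧ Q ≤ fixExtremes Q ∧
      Multiset.card (fixExtremes Q) ≤ Multiset.card Q + 2 := by
  have h0 : fval ((fun _ => false) : Pt n) = 0 := by simp [fval]
  have hn : fval ((fun _ => true) : Pt n) = n := by simp [fval]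
  unfold fixExtremes goodExR
  dsimp only
  split_ifs <;>
    simp_all [Multiset.le_cons_self, (Multiset.le_cons_self Q _).trans (Multiset.le_cons_self _ _)]

end OneMinMax

section Elimination

variable {n : ℕ} {p : ℝ≥0} {hp : p ≤ 1}

lemma exists_eq_gval_of_mem_support_noisyG {x : Pt n} {w : ℕ × ℕ}
    (hw : w ∈ (noisyG p hp x).support) : ∃ z : Pt n, w = gval z := by
  rw [noisyG, PMF.support_map] at hw
  obtain ⟨z, -, rfl⟩ := hw
  exact ⟨z, rfl⟩

lemma expect_noisyG_ne_gval_le (x : Pt n) :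
    (noisyG p hp x).expect (fun w => if w = gval x then 0 else 1) ≤ p := by
  have hmut : (mutate x).expect (fun y => if gval y = gval x then 0 else 1) ≤ 1 :=
    expect_le_of_forall_le fun y _ => by split_ifs <;> simp
  rw [noisyG, expect_map, noisyPoint, expect_bind, expect, tsum_bool]
  simpa [PMF.bernoulli_apply, expect_pure, Function.comp_def] using mul_le_of_le_one_right' hmut

/-- No noisy value strictly dominates an attained one, so elimination never discards a
point while the kept values are attained. -/
def ValuesAttained (kept : Multiset (Pt n × (ℕ × ℕ))) : Prop :=
  ∀ y ∈ kept, ∃ z : Pt n, y.2 = gval z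

def keepWith (x : Pt n) (w : ℕ × ℕ) (kept : Multiset (Pt n × (ℕ × ℕ))) :
    Multiset (Pt n × (ℕ × ℕ)) :=
  (x, w) ::ₘ kept.filter fun y => ¬ domLe y.2 w

lemma ValuesAttained.keepWith {kept : Multiset (Pt n × (ℕ × ℕ))} (h : ValuesAttained kept)
    (x z : Pt n) : ValuesAttained (keepWith x (gval z) kept) := by
  intro y hy
  rcases Multiset.mem_cons.mp hy with rfl | hy
  · exact ⟨z, rfl⟩
  · exact h y (Multiset.mem_of_mem_filter hy)

lemma elimAux_cons_eq {kept : Multiset (Pt n × (ℕ × ℕ))} (h : ValuesAttained kept)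
    (x : Pt n) (rest : List (Pt n)) {w : ℕ × ℕ} (hw : w ∈ (noisyG p hp x).support) :
    (if ∃ y ∈ kept, domLt w y.2 then elimAux p hp rest kept
      else elimAux p hp rest ((x, w) ::ₘ kept.filter fun y => ¬ domLe y.2 w))
      = elimAux p hp rest (keepWith x w kept) := by
  obtain ⟨z, rfl⟩ := exists_eq_gval_of_mem_support_noisyG hw
  refine if_neg ?_
  rintro ⟨y, hy, hlt⟩
  obtain ⟨u, hu⟩ := h y hy
  exact not_domLt_gval z u (hu ▸ hlt)

lemma expect_elimAux_cons {kept : Multiset (Pt n × (ℕ × ℕ))} (h : ValuesAttained kept)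
    (x : Pt n) (rest : List (Pt n)) (f : Multiset (Pt n × (ℕ × ℕ)) → ℝ≥0∞) :
    (elimAux p hp (x :: rest) kept).expect f
      = (noisyG p hp x).expect fun w => (elimAux p hp rest (keepWith x w kept)).expect f := by
  rw [elimAux, expect_bind]
  exact expect_congr fun w hw => by rw [elimAux_cons_eq h x rest hw]

def exactVals (kept : Multiset (Pt n × (ℕ × ℕ))) : Finset ℕ :=
  ((kept.filter fun y => y.2 = gval y.1).map fun y => y.2.1).toFinset

lemma mem_exactVals {kept : Multiset (Pt n × (ℕ × ℕ))} {v : ℕ} :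
    v ∈ exactVals kept ↔ ∃ y ∈ kept, y.2 = gval y.1 ∧ y.2.1 = v := by
  simp [exactVals, and_assoc]

lemma card_exactVals_le_Lval (kept : Multiset (Pt n × (ℕ × ℕ))) :
    (exactVals kept).card ≤ Lval (kept.map Prod.fst) := by
  refine Finset.card_le_card fun v hv => ?_
  obtain ⟨y, hy, hex, rfl⟩ := mem_exactVals.mp hv
  exact mem_fvals.mpr ⟨y.1, Multiset.mem_map_of_mem _ hy, by rw [hex]; rfl⟩

lemma fval_mem_exactVals_keepWith (x : Pt n) (kept : Multiset (Pt n × (ℕ × ℕ))) :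
    fval x ∈ exactVals (keepWith x (gval x) kept) :=
  mem_exactVals.mpr ⟨(x, gval x), Multiset.mem_cons_self _ _, rfl, rfl⟩

/-- Only the values `fval x` and `(gval z).1` can be lost when `x` is processed with noisy
value `gval z`: any other exact pair has a different value and thus survives. -/
lemma exactVals_union_fvals_cons_subset (x z : Pt n) (kept : Multiset (Pt n × (ℕ × ℕ)))
    (R : Multiset (Pt n)) :
    exactVals kept ∪ fvals (x ::ₘ R)
      ⊆ insert (fval x) (insert (gval z).1 (exactVals (keepWith x (gval z) kept) ∪ fvals R)) := by
  intro v hv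
  simp only [Finset.mem_union, fvals_cons, Finset.mem_insert] at hv ⊢
  rcases hv with hv | rfl | hv
  · obtain ⟨y, hy, hex, rfl⟩ := mem_exactVals.mp hv
    by_cases hyz : y.2.1 = (gval z).1
    · exact Or.inr (Or.inl hyz)
    refine Or.inr (Or.inr (Or.inl (mem_exactVals.mpr ⟨y, ?_, hex, rfl⟩)))
    refine Multiset.mem_cons_of_mem (Multiset.mem_filter.mpr ⟨hy, fun hle => hyz ?_⟩)
    rw [hex] at hle ⊢
    exact domLe_gval_iff.mp hle
  · exact Or.inl rfl
  · exact Or.inr (Or.inr (Or.inr hv))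

lemma card_exactVals_union_fvals_cons_le (x z : Pt n) (kept : Multiset (Pt n × (ℕ × ℕ)))
    (R : Multiset (Pt n)) :
    ((exactVals kept ∪ fvals (x ::ₘ R)).card : ℝ≥0∞)
      ≤ (exactVals (keepWith x (gval z) kept) ∪ fvals R).card
        + 2 * (if gval z = gval x then 0 else 1) := by
  have hsub := Finset.card_le_card (exactVals_union_fvals_cons_subset x z kept R)
  set U := exactVals (keepWith x (gval z) kept) ∪ fvals R
  split_ifs with hzx
  · have hx : fval x ∈ U := Finset.mem_union_left _ (hzx ▸ fval_mem_exactVals_keepWith x kept)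
    have hz : (gval z).1 = fval x := by rw [hzx]; rfl
    rw [hz, Finset.insert_eq_of_mem hx, Finset.insert_eq_of_mem hx] at hsub
    simpa using hsub
  · have := (Finset.card_insert_le (fval x) _).trans
      (Nat.succ_le_succ (Finset.card_insert_le (gval z).1 U))
    norm_cast
    omega

lemma card_exactVals_union_fvals_le_expect (l : List (Pt n))
    {kept : Multiset (Pt n × (ℕ × ℕ))} (h : ValuesAttained kept) :
    ((exactVals kept ∪ fvals (l : Multiset (Pt n))).card : ℝ≥0∞)
      ≤ (elimAux p hp l kept).expect (fun out => (exactVals out).card) + 2 * p * l.length := by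
  induction l generalizing kept with
  | nil => simp [elimAux, expect_pure, fvals]
  | cons x rest ih =>
    let E := fun w => (elimAux p hp rest (keepWith x w kept)).expect
      fun out => ((exactVals out).card : ℝ≥0∞)
    calc ((exactVals kept ∪ fvals ((x :: rest : List (Pt n)) : Multiset (Pt n))).card : ℝ≥0∞)
        ≤ (noisyG p hp x).expect fun w =>
            (exactVals (keepWith x w kept) ∪ fvals (rest : Multiset (Pt n))).card
              + 2 * (if w = gval x then 0 else 1) := by
          refine le_expect_of_forall_le fun w hw => ?_
          obtain ⟨z, rfl⟩ := exists_eq_gval_of_mem_support_noisyG hw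
          rw [← Multiset.cons_coe]
          exact card_exactVals_union_fvals_cons_le x z kept rest
      _ ≤ (noisyG p hp x).expect fun w =>
            E w + 2 * p * rest.length + 2 * (if w = gval x then 0 else 1) := by
          refine expect_mono fun w hw => ?_
          obtain ⟨z, rfl⟩ := exists_eq_gval_of_mem_support_noisyG hw
          gcongr
          exact ih (h.keepWith x z)
      _ = (elimAux p hp (x :: rest) kept).expect (fun out => (exactVals out).card)
            + 2 * p * rest.length
            + 2 * (noisyG p hp x).expect (fun w => if w = gval x then 0 else 1) := by
          rw [expect_add, expect_add_const, expect_const_mul, expect_elimAux_cons h]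
      _ ≤ (elimAux p hp (x :: rest) kept).expect (fun out => (exactVals out).card)
            + 2 * p * rest.length + 2 * p := by
          gcongr
          exact expect_noisyG_ne_gval_le x
      _ = _ := by
          rw [List.length_cons, Nat.cast_succ]
          ring

lemma nodup_map_keepWith {kept : Multiset (Pt n × (ℕ × ℕ))} (h : ValuesAttained kept)
    (hnd : (kept.map fun y => y.2.1).Nodup) (x z : Pt n) :
    ((keepWith x (gval z) kept).map fun y => y.2.1).Nodup := by
  rw [keepWith, Multiset.map_cons, Multiset.nodup_cons]
  refine ⟨fun hmem => ?_, Multiset.nodup_of_le (Multiset.map_le_map (Multiset.filter_le _ _)) hnd⟩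
  obtain ⟨y, hy, hval⟩ := Multiset.mem_map.mp hmem
  obtain ⟨hyk, hnle⟩ := Multiset.mem_filter.mp hy
  obtain ⟨u, hu⟩ := h y hyk
  exact hnle (hu ▸ domLe_gval_iff.mpr (by rw [hu] at hval; exact hval))

lemma card_le_of_mem_support_elimAux (l : List (Pt n)) {kept : Multiset (Pt n × (ℕ × ℕ))}
    (h : ValuesAttained kept) (hnd : (kept.map fun y => y.2.1).Nodup)
    {out : Multiset (Pt n × (ℕ × ℕ))} (hout : out ∈ (elimAux p hp l kept).support) :
    Multiset.card out ≤ n + 1 := by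
  induction l generalizing kept with
  | nil =>
    rw [elimAux, PMF.support_pure, Set.mem_singleton_iff] at hout
    subst hout
    rw [← Multiset.card_map (fun y => y.2.1), ← Multiset.toFinset_card_of_nodup hnd]
    refine (Finset.card_le_card fun v hv => ?_).trans_eq (Finset.card_range _)
    obtain ⟨y, hy, rfl⟩ := Multiset.mem_map.mp (Multiset.mem_toFinset.mp hv)
    obtain ⟨z, hz⟩ := h y hy
    exact Finset.mem_range_succ_iff.mpr (hz ▸ fval_le z)
  | cons x rest ih =>
    rw [elimAux, PMF.mem_support_bind_iff] at hout
    obtain ⟨w, hw, hout⟩ := hout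
    rw [elimAux_cons_eq h x rest hw] at hout
    obtain ⟨z, rfl⟩ := exists_eq_gval_of_mem_support_noisyG hw
    exact ih (h.keepWith x z) (nodup_map_keepWith h hnd x z) hout

end Elimination

section Mutation

variable {n : ℕ}

lemma expect_mutate (hn : 0 < n) (x : Pt n) (f : Pt n → ℝ≥0∞) :
    (mutate x).expect f = ∑ i : Fin n, (n : ℝ≥0∞)⁻¹ * f (flipBit x i) := by
  have hne : (Finset.univ : Finset (Fin n)).Nonempty := ⟨⟨0, hn⟩, Finset.mem_univ _⟩
  rw [mutate, dif_pos hne, expect_map, expect, tsum_fintype]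
  refine Finset.sum_congr rfl fun i _ => ?_
  rw [PMF.uniformOfFinset_apply_of_mem _ (Finset.mem_univ i), Finset.card_univ,
    Fintype.card_fin, Function.comp_apply]

lemma inv_two_le_expect_mutate_notMem (hn : 0 < n) (x : Pt n) {T : Finset ℕ}
    (S : Finset (Fin n)) (hS : ∀ i ∈ S, fval (flipBit x i) ∉ T) (hcard : n ≤ 2 * S.card) :
    2⁻¹ ≤ (mutate x).expect (fun y => if fval y ∈ T then 0 else 1) := by
  have hn' : (n : ℝ≥0∞) ≠ 0 := by exact_mod_cast hn.ne'
  calc (2 : ℝ≥0∞)⁻¹ = (n : ℝ≥0∞)⁻¹ * (n / 2) := by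
        rw [← mul_div_assoc, ENNReal.inv_mul_cancel hn' (ENNReal.natCast_ne_top n), one_div]
    _ ≤ (n : ℝ≥0∞)⁻¹ * S.card := by
        gcongr
        exact ENNReal.div_le_of_le_mul (by exact_mod_cast (by omega : n ≤ S.card * 2))
    _ = ∑ i ∈ S, (n : ℝ≥0∞)⁻¹ * (if fval (flipBit x i) ∈ T then 0 else 1) := by
        rw [Finset.sum_congr rfl fun i hi => by rw [if_neg (hS i hi), mul_one],
          Finset.sum_const, nsmul_eq_mul, mul_comm]
    _ ≤ (mutate x).expect (fun y => if fval y ∈ T then 0 else 1) := by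
        rw [expect_mutate hn]
        exact Finset.sum_le_sum_of_subset (Finset.subset_univ S)

lemma exists_mem_succ_notMem {T : Finset ℕ} {c v : ℕ} (hc : c ∈ T) (hcv : c ≤ v)
    (hv : v ∉ T) : ∃ a ∈ T, a < v ∧ a + 1 ∉ T := by
  have ha : Nat.findGreatest (· ∈ T) v ∈ T := Nat.findGreatest_spec hcv hc
  have hav : Nat.findGreatest (· ∈ T) v < v :=
    (Nat.findGreatest_le v).lt_of_ne fun h => hv (h ▸ ha)
  exact ⟨_, ha, hav, Nat.findGreatest_is_greatest (Nat.lt_succ_self _) hav⟩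

lemma exists_mem_pred_notMem {T : Finset ℕ} {c v : ℕ} (hc : c ∈ T) (hvc : v ≤ c)
    (hv : v ∉ T) : ∃ b ∈ T, v < b ∧ b - 1 ∉ T := by
  have hex : ∃ b, v ≤ b ∧ b ∈ T := ⟨c, hvc, hc⟩
  obtain ⟨hvb, hb⟩ := Nat.find_spec hex
  have hvb' : v < Nat.find hex := hvb.lt_of_ne fun h => hv (h ▸ hb)
  exact ⟨_, hb, hvb', fun hb' => Nat.find_min hex (by omega) ⟨by omega, hb'⟩⟩

/-- A population containing both extremes but not covering `[0..n]` has a member at the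
edge of a gap, on the side with at least `n/2` improving bits. -/
lemma exists_mem_inv_two_le_expect_mutate (hn : 0 < n) {P : StateR n} (hex : goodExR P)
    (hcov : ¬ fCoveredR P) :
    ∃ x ∈ P, 2⁻¹ ≤ (mutate x).expect (fun y => if fval y ∈ fvals P then 0 else 1) := by
  obtain ⟨h0, hN⟩ := goodExR_iff_mem_fvals.mp hex
  obtain ⟨v, hvn, hv⟩ := exists_notMem_fvals_of_not_fCoveredR hcov
  by_cases hlow : 2 * v ≤ n
  · obtain ⟨a, ha, hav, ha1⟩ := exists_mem_succ_notMem h0 (Nat.zero_le v) hv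
    obtain ⟨x, hx, rfl⟩ := mem_fvals.mp ha
    refine ⟨x, hx, inv_two_le_expect_mutate_notMem hn x
      (Finset.univ.filter fun i => x i = false) (fun i hi => ?_) ?_⟩
    · rwa [fval_flipBit_of_false (Finset.mem_filter.mp hi).2]
    · rw [card_filter_eq_false]; omega
  · obtain ⟨b, hb, hvb, hb1⟩ := exists_mem_pred_notMem hN hvn hv
    obtain ⟨x, hx, rfl⟩ := mem_fvals.mp hb
    refine ⟨x, hx, inv_two_le_expect_mutate_notMem hn x
      (Finset.univ.filter fun i => x i = true) (fun i hi => ?_) ?_⟩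
    · have := fval_flipBit_of_true (Finset.mem_filter.mp hi).2
      rwa [show fval (flipBit x i) = fval x - 1 by omega]
    · change n ≤ 2 * fval x; omega

end Mutation

section Drift

variable {n : ℕ} {p : ℝ≥0} {hp : p ≤ 1}

lemma card_le_of_mem_support_stepR {P Q : StateR n} (hP : P ≠ 0)
    (hQ : Q ∈ (stepR p hp P).support) : Multiset.card Q ≤ n + 1 := by
  simp only [stepR, dif_neg hP, PMF.mem_support_bind_iff, PMF.support_map,
    Set.mem_image] at hQ
  obtain ⟨-, -, -, -, l, -, kept, hkept, rfl⟩ := hQ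
  rw [Multiset.card_map]
  exact card_le_of_mem_support_elimAux l (fun _ h => absurd h (Multiset.notMem_zero _))
    Multiset.nodup_zero hkept

/-- Elimination loses, in expectation, at most `2p` distinct values per processed point. -/
lemma expect_card_insert_fvals_le (P : StateR n) (hP : P ≠ 0) :
    (PMF.ofMultiset P hP).expect
        (fun x => (mutate x).expect fun y => ((insert (fval y) (fvals P)).card : ℝ≥0∞))
      ≤ (stepR p hp P).expect (fun Q => (Lval Q : ℝ≥0∞))
        + 2 * p * ((Multiset.card P + 1 : ℕ) : ℝ≥0∞) := by
  rw [stepR, dif_neg hP]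
  simp only [expect_bind, expect_map]
  rw [← expect_add_const]
  refine expect_mono fun x _ => ?_
  rw [← expect_add_const]
  refine expect_mono fun y _ => ?_
  rw [← expect_add_const]
  refine le_expect_of_forall_le fun l hl => ?_
  rw [PMF.support_ofMultiset] at hl
  have hl : l.Perm (y ::ₘ P).toList := List.mem_permutations.mp (by simpa using hl)
  have hlP : (l : Multiset (Pt n)) = y ::ₘ P := by
    rw [← Multiset.coe_toList (y ::ₘ P)]
    exact Multiset.coe_eq_coe.mpr hl
  have hlen : l.length = Multiset.card P + 1 := by
    rw [← Multiset.coe_card, hlP, Multiset.card_cons]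
  have helim := card_exactVals_union_fvals_le_expect (p := p) (hp := hp) l
    (kept := 0) (fun _ h => absurd h (Multiset.notMem_zero _))
  rw [hlP, fvals_cons, hlen, show exactVals (0 : Multiset (Pt n × (ℕ × ℕ))) = ∅ from rfl,
    Finset.empty_union] at helim
  refine helim.trans (add_le_add (expect_mono fun kept _ => ?_) le_rfl)
  simp only [Function.comp_apply]
  exact_mod_cast card_exactVals_le_Lval kept

lemma inv_add_two_mul_le_inv_two_mul {c : ℕ} (hn : 2 ≤ n) (hc1 : 1 ≤ c) (hc : c ≤ n + 3)
    (hpn : (p : ℝ) ≤ 1 / 200 / n ^ 2) :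
    (10 * n : ℝ≥0∞)⁻¹ + 2 * p * ((c + 1 : ℕ) : ℝ≥0∞) ≤ (2 * c : ℝ≥0∞)⁻¹ := by
  have hn' : (2 : ℝ) ≤ n := by exact_mod_cast hn
  have hc1' : (1 : ℝ) ≤ c := by exact_mod_cast hc1
  have hc' : (c : ℝ) ≤ n + 3 := by exact_mod_cast hc
  rw [← ENNReal.toReal_le_toReal (by finiteness) (by finiteness),
    ENNReal.toReal_add (by finiteness) (by finiteness)]
  simp only [ENNReal.toReal_inv, ENNReal.toReal_mul, ENNReal.toReal_natCast, ENNReal.coe_toReal,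
    ENNReal.toReal_ofNat]
  push_cast
  have hnoise : 2 * (p : ℝ) * (c + 1) ≤ 3 / (100 * n) :=
    calc 2 * (p : ℝ) * (c + 1) ≤ 2 * (1 / 200 / n ^ 2) * (3 * n) := by gcongr; linarith
      _ = 3 / (100 * n) := by field_simp; ring
  have hgap : 1 / (10 * n : ℝ) + 3 / (100 * n) ≤ 1 / (2 * c) := by
    rw [div_add_div _ _ (by positivity) (by positivity),
      div_le_div_iff₀ (by positivity) (by positivity)]
    nlinarith
  simp only [one_div] at hgap
  linarith

lemma Lval_add_le_expect_stepR (hn : 2 ≤ n) (hpn : (p : ℝ) ≤ 1 / 200 / n ^ 2) {P : StateR n}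
    (hex : goodExR P) (hcard : Multiset.card P ≤ n + 3) (hcov : ¬ fCoveredR P) :
    Lval P + (10 * n : ℝ≥0∞)⁻¹ ≤ (stepR p hp P).expect (fun Q => (Lval Q : ℝ≥0∞)) := by
  have hP := hex.ne_zero
  set c := Multiset.card P
  have hc1 : 1 ≤ c := Multiset.card_pos.mpr hP
  obtain ⟨x₀, hx₀, hgain⟩ := exists_mem_inv_two_le_expect_mutate (by omega) hex hcov
  have hsel : (c : ℝ≥0∞)⁻¹ ≤ PMF.ofMultiset P hP x₀ := by
    rw [PMF.ofMultiset_apply, ENNReal.div_eq_inv_mul]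
    exact le_mul_of_one_le_right'
      (Nat.one_le_cast.mpr (by convert Multiset.one_le_count_iff_mem.mpr hx₀))
  have hinsert : ∀ y : Pt n, ((insert (fval y) (fvals P)).card : ℝ≥0∞)
      = Lval P + if fval y ∈ fvals P then 0 else 1 := by
    intro y
    rw [Finset.card_insert_eq_ite, Lval_eq_card_fvals]
    split_ifs <;> simp
  have hexplore : Lval P + (2 * c : ℝ≥0∞)⁻¹ ≤ (PMF.ofMultiset P hP).expect
      (fun x => (mutate x).expect fun y => ((insert (fval y) (fvals P)).card : ℝ≥0∞)) := by
    simp only [hinsert, add_comm (Lval P : ℝ≥0∞), expect_add_const]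
    gcongr
    calc (2 * c : ℝ≥0∞)⁻¹ = (c : ℝ≥0∞)⁻¹ * 2⁻¹ := by
          rw [mul_comm, ENNReal.mul_inv (by simp) (by simp)]
      _ ≤ PMF.ofMultiset P hP x₀ * (mutate x₀).expect
            (fun y => if fval y ∈ fvals P then 0 else 1) := by gcongr
      _ ≤ _ := apply_mul_le_expect _ _ x₀
  have hfin : 2 * (p : ℝ≥0∞) * ((c + 1 : ℕ) : ℝ≥0∞) ≠ ⊤ := by finiteness
  refine (ENNReal.add_le_add_iff_right hfin).mp ?_
  calc Lval P + (10 * n : ℝ≥0∞)⁻¹ + 2 * p * ((c + 1 : ℕ) : ℝ≥0∞)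
      ≤ Lval P + (2 * c : ℝ≥0∞)⁻¹ := by
        rw [add_assoc]; gcongr; exact inv_add_two_mul_le_inv_two_mul hn hc1 hcard hpn
    _ ≤ _ := hexplore
    _ ≤ _ := expect_card_insert_fvals_le P hP

end Drift

section KeepingExtremes

variable {n : ℕ} {p : ℝ≥0} {hp : p ≤ 1}

lemma mem_support_stepK {K : ℕ} {s s' : ℕ × StateR n} (hs : s.1 < K) (hex : goodExR s.2)
    (hs' : s' ∈ (stepK p hp K s).support) :
    s'.1 = s.1 + 1 ∧ goodExR s'.2 ∧ Multiset.card s'.2 ≤ n + 3 := by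
  rw [stepK, PMF.support_map] at hs'
  obtain ⟨Q, hQ, rfl⟩ := hs'
  dsimp only
  rw [if_pos hs]
  obtain ⟨hgood, -, hcard⟩ := fixExtremes_spec Q
  have := card_le_of_mem_support_stepR hex.ne_zero hQ
  exact ⟨rfl, hgood, by omega⟩

lemma Lval_add_le_expect_stepK (hn : 2 ≤ n) (hpn : (p : ℝ) ≤ 1 / 200 / n ^ 2) (K : ℕ)
    {s : ℕ × StateR n} (hex : goodExR s.2) (hcard : Multiset.card s.2 ≤ n + 3)
    (hcov : ¬ fCoveredR s.2) :
    Lval s.2 + (10 * n : ℝ≥0∞)⁻¹ ≤ (stepK p hp K s).expect (fun s' => (Lval s'.2 : ℝ≥0∞)) := by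
  refine (Lval_add_le_expect_stepR (hp := hp) hn hpn hex hcard hcov).trans ?_
  rw [stepK, expect_map]
  refine expect_mono fun Q _ => ?_
  simp only [Function.comp_apply]
  split_ifs
  · exact_mod_cast Lval_mono (fixExtremes_spec Q).2.1
  · exact le_rfl

lemma le_ofReal_of_inv_mul_le {q : ℝ≥0∞} {m : ℕ} (hn : 2 ≤ n) (hq1 : q ≤ 1)
    (hq : (10 * n : ℝ≥0∞)⁻¹ * ((m + 1) * q) ≤ ((n + 1 : ℕ) : ℝ≥0∞)) :
    q ≤ ENNReal.ofReal (100 * n ^ 2 / (m + 2 : ℕ)) := by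
  have hq' := ENNReal.toReal_mono (by finiteness) hq
  rw [← ENNReal.ofReal_toReal (ne_top_of_le_ne_top ENNReal.one_ne_top hq1)]
  refine ENNReal.ofReal_le_ofReal ?_
  simp only [ENNReal.toReal_inv, ENNReal.toReal_mul, ENNReal.toReal_natCast,
    ENNReal.toReal_ofNat, ENNReal.toReal_add (ENNReal.natCast_ne_top m) ENNReal.one_ne_top,
    ENNReal.toReal_one] at hq'
  have hn' : (2 : ℝ) ≤ n := by exact_mod_cast hn
  have hq0 := q.toReal_nonneg
  rw [le_div_iff₀ (by positivity)]
  rw [inv_mul_le_iff₀ (by positivity)] at hq'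
  push_cast at hq' ⊢
  nlinarith

end KeepingExtremes

/-- there are constants `β, C > 0` such that for all `n ≥ 2`, all noise
rates `p ≤ β/n²`, every `K ≥ 1` and every initial population containing members of true
value `0` and `n`, the `K`-extreme-values-keeping SEMO with reevaluation satisfies
`Pr[T̂ ≥ K] ≤ C · n² / K` (here `Pr[T̂ ≥ K] = Pr[T̂ > K - 1]`). -/
theorem statement13 :
    ∃ β C : ℝ, 0 < β ∧ 0 < C ∧
      ∀ n : ℕ, 2 ≤ n → ∀ p : ℝ≥0, ∀ hp : p ≤ 1, (p : ℝ) ≤ β / n ^ 2 →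
        ∀ K : ℕ, 1 ≤ K → ∀ P₀ : StateR n,
          (∃ x ∈ P₀, fval (x : Pt n) = 0) → (∃ x ∈ P₀, fval (x : Pt n) = n) →
          notHitBy (stepK p hp K) (fun st => fCoveredR st.2) (K - 1) ((0 : ℕ), P₀) ≤
            ENNReal.ofReal (C * n ^ 2 / K) := by
  refine ⟨1 / 200, 100, by norm_num, by norm_num, ?_⟩
  intro n hn p hp hpn K hK P₀ h0 hN
  let Inv (j : ℕ) (s : ℕ × StateR n) : Prop :=
    s.1 + j < K ∧ goodExR s.2 ∧ Multiset.card s.2 ≤ n + 3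
  have htail : ∀ j s, Inv j s → (10 * n : ℝ≥0∞)⁻¹ *
      ((j + 1) * notHitBy (stepK p hp K) (fun st => fCoveredR st.2) j s) ≤ ((n + 1 : ℕ) : ℝ≥0∞) :=
    drift_mul_notHitBy_le (Inv := Inv) (ψ := fun s => (Lval s.2 : ℝ≥0∞)) (M := ((n + 1 : ℕ) : ℝ≥0∞))
      (fun s => by exact_mod_cast Lval_le s.2)
      (fun j s hs _ s' hs' => by
        obtain ⟨h1, h2, h3⟩ := mem_support_stepK (by omega) hs.2.1 hs'
        exact ⟨by omega, h2, h3⟩)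
      (fun j s hs hcov => Lval_add_le_expect_stepK hn hpn K hs.2.1 hs.2.2 hcov)
  obtain rfl | ⟨m, rfl⟩ : K = 1 ∨ ∃ m, K = m + 2 := by
    rcases K with _ | _ | m
    exacts [absurd hK (by norm_num), Or.inl rfl, Or.inr ⟨m, rfl⟩]
  · refine (notHitBy_le_one _ _ _ _).trans (ENNReal.one_le_ofReal.mpr ?_)
    have hn' : (2 : ℝ) ≤ n := by exact_mod_cast hn
    norm_num
    nlinarith
  · -- `P₀` may be arbitrarily large; after one step the population has at most `n + 3` members.
    refine notHitBy_succ_le_of_forall_mem_support _ _ fun s' hs' => ?_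
    obtain ⟨h1, h2, h3⟩ := mem_support_stepK (by omega) ⟨h0, hN⟩ hs'
    exact le_ofReal_of_inv_mul_le hn (notHitBy_le_one _ _ _ _)
      (htail m s' ⟨by simp only at h1; omega, h2, h3⟩)

end
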